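/- Consider the convex optimization problem of the previous context with W ≥ 1/(2M+1): minimize f = M·μ + M·σ + (2M+1)·θ + ν/W − 2M subject to (1−μ)^+ + (1−σ)^+ + (1−θ)^+ + (Wα_S − ν)^+ ≤ r, μ,σ,θ,ν ≥ 0, μ+θ ≥ 1, σ+θ ≥ 1. Then the minimum value equals 2M+1+α_S − (2M+1)·r for 0 ≤ r ≤ 1, and α_S + (1−r)/W for 1 ≤ r ≤ 1 + W·α_S. -/

import Mathlib

/-!
Write `a, b, c, d` for the four positive parts in the budget constraint. Since `μ ≥ 1 - a`,
`σ ≥ 1 - b`, `θ ≥ 1 - c` and `ν ≥ Wα_S - d`, the objective is at least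
`2M+1+α_S - M a - M b - (2M+1) c - d/W`, and the coupling constraints `μ + θ ≥ 1`, `σ + θ ≥ 1`
give `a, b ≤ 1 - c`. The LP thus becomes one in the deficits, where `1/W ≤ 2M+1` makes it
cheapest to spend the budget first on `c` (at price `2M+1`) and then on `d` (at price `1/W`);
both lower bounds hold for every `r`, and the two feasible points realising them
are `(1, 1, 1-r, Wα_S)` and `(1, 1, 0, Wα_S-(r-1))`.
-/

/-- Feasible objective values of the sum-rate diversity-order LP for the
`(M,1,1,M)` side-channel assisted full-duplex network. -/
def sumDivSet (M : ℕ) (W αS r : ℝ) : Set ℝ :=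
  {y : ℝ | ∃ μ σ θ ν : ℝ, 0 ≤ μ ∧ 0 ≤ σ ∧ 0 ≤ θ ∧ 0 ≤ ν ∧
    1 ≤ μ + θ ∧ 1 ≤ σ + θ ∧
    max (1 - μ) 0 + max (1 - σ) 0 + max (1 - θ) 0 + max (W * αS - ν) 0 ≤ r ∧
    y = (M : ℝ) * μ + (M : ℝ) * σ + (2 * (M : ℝ) + 1) * θ + ν / W - 2 * (M : ℝ)}

lemma max_one_sub_le_one_sub_max_of_one_le_add {μ θ : ℝ} (hμ : 0 ≤ μ) (hθ : 0 ≤ θ)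
    (hμθ : 1 ≤ μ + θ) : max (1 - μ) 0 ≤ 1 - max (1 - θ) 0 := by
  rcases max_cases (1 - θ) 0 with ⟨h, _⟩ | ⟨h, _⟩ <;> rw [h] <;> apply max_le <;> linarith

lemma sub_mul_add_add_sub_mul_nonneg {m l a b s : ℝ} (hl : 0 ≤ l) (hlm : l ≤ 2 * m + 1)
    (ha : 0 ≤ a) (has : a ≤ s) (hb : 0 ≤ b) (hbs : b ≤ s) :
    0 ≤ (l - m) * (a + b) + (2 * m + 1 - l) * s := by
  rcases le_total m l with hml | hlm'
  · have := mul_nonneg (sub_nonneg.2 hml) (add_nonneg ha hb)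
    have := mul_nonneg (sub_nonneg.2 hlm) (ha.trans has)
    linarith
  · have := mul_le_mul_of_nonpos_left (add_le_add has hbs) (sub_nonpos.2 hlm')
    nlinarith

section

variable {M : ℕ} {W αS r y : ℝ}

lemma exists_deficits_of_mem_sumDivSet (hW : 0 < W) (hy : y ∈ sumDivSet M W αS r) :
    ∃ a b c d : ℝ, 0 ≤ a ∧ 0 ≤ b ∧ 0 ≤ d ∧ a ≤ 1 - c ∧ b ≤ 1 - c ∧ a + b + c + d ≤ r ∧
      2 * M + 1 + αS - M * a - M * b - (2 * M + 1) * c - d / W ≤ y := by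
  obtain ⟨μ, σ, θ, ν, hμ, hσ, hθ, -, hμθ, hσθ, hbudget, rfl⟩ := hy
  refine ⟨_, _, _, _, le_max_right _ _, le_max_right _ _, le_max_right _ _,
    max_one_sub_le_one_sub_max_of_one_le_add hμ hθ hμθ,
    max_one_sub_le_one_sub_max_of_one_le_add hσ hθ hσθ, hbudget, ?_⟩
  have hM : (0 : ℝ) ≤ M := M.cast_nonneg
  have hμa := mul_le_mul_of_nonneg_left (le_max_left (1 - μ) 0) hM
  have hσb := mul_le_mul_of_nonneg_left (le_max_left (1 - σ) 0) hM
  have hθc := mul_le_mul_of_nonneg_left (le_max_left (1 - θ) 0)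
    (by positivity : (0 : ℝ) ≤ 2 * M + 1)
  have hνd := div_le_div_of_nonneg_right (le_max_left (W * αS - ν) 0) hW.le
  rw [sub_div, mul_div_cancel_left₀ _ hW.ne'] at hνd
  linarith

lemma le_of_mem_sumDivSet_of_steep (hW : 0 < W) (hWge : W⁻¹ ≤ 2 * M + 1)
    (hy : y ∈ sumDivSet M W αS r) : 2 * M + 1 + αS - (2 * M + 1) * r ≤ y := by
  obtain ⟨a, b, c, d, ha, hb, hd, -, -, hbudget, hy⟩ :=
    exists_deficits_of_mem_sumDivSet hW hy
  have hM : (M : ℝ) ≤ 2 * M + 1 := by linarith [M.cast_nonneg (α := ℝ)]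
  have := mul_le_mul_of_nonneg_right hM ha
  have := mul_le_mul_of_nonneg_right hM hb
  have := mul_le_mul_of_nonneg_right hWge hd
  have := mul_le_mul_of_nonneg_left hbudget (by positivity : (0 : ℝ) ≤ 2 * M + 1)
  rw [div_eq_inv_mul] at hy
  linarith

lemma le_of_mem_sumDivSet_of_flat (hW : 0 < W) (hWge : W⁻¹ ≤ 2 * M + 1)
    (hy : y ∈ sumDivSet M W αS r) : αS + (1 - r) / W ≤ y := by
  obtain ⟨a, b, c, d, ha, hb, -, hac, hbc, hbudget, hy⟩ :=
    exists_deficits_of_mem_sumDivSet hW hy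
  have hslack := sub_mul_add_add_sub_mul_nonneg (inv_nonneg.2 hW.le) hWge ha hac hb hbc
  have hd := mul_le_mul_of_nonneg_left (show d ≤ r - a - b - c by linarith) (inv_nonneg.2 hW.le)
  rw [div_eq_inv_mul] at hy ⊢
  linarith

end

theorem sum_diversity_lp_large_W_general (M : ℕ) (W αS : ℝ)
    (hW : 0 < W) (hS : 0 < αS)
    (hWge : 1 / (2 * (M : ℝ) + 1) ≤ W) :
    (∀ r : ℝ, 0 ≤ r → r ≤ 1 →
      IsLeast (sumDivSet M W αS r)
        (2 * (M : ℝ) + 1 + αS - (2 * (M : ℝ) + 1) * r)) ∧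
    (∀ r : ℝ, 1 ≤ r → r ≤ 1 + W * αS →
      IsLeast (sumDivSet M W αS r) (αS + (1 - r) / W)) := by
  have hWinv : W⁻¹ ≤ 2 * M + 1 := by
    rwa [one_div, inv_le_comm₀ (by positivity) hW] at hWge
  have hν : 0 ≤ W * αS := by positivity
  refine ⟨fun r hr0 hr1 => ⟨?_, fun y => le_of_mem_sumDivSet_of_steep hW hWinv⟩,
    fun r hr1 hr2 => ⟨?_, fun y => le_of_mem_sumDivSet_of_flat hW hWinv⟩⟩
  · refine ⟨1, 1, 1 - r, W * αS, zero_le_one, zero_le_one, by linarith, hν,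
      by linarith, by linarith, ?_, ?_⟩
    · simp [max_eq_left hr0]
    · field_simp
      ring
  · refine ⟨1, 1, 0, W * αS - (r - 1), zero_le_one, zero_le_one, le_rfl, by linarith,
      by norm_num, by norm_num, ?_, ?_⟩
    · simp [max_eq_left (sub_nonneg.2 hr1)]
    · field_simp
      ring

/-- When `W ≥ 1/(2M+1)`, the minimum of the sum diversity-order LP equals
`2M+1+αS − (2M+1)·r` for `0 ≤ r ≤ 1`, and `αS + (1−r)/W` for `1 ≤ r ≤ 1 + W·αS`. -/
theorem sum_diversity_lp_large_W (M : ℕ) (hM : 1 ≤ M) (W αS : ℝ)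
    (hW : 0 < W) (hS : 0 < αS)
    (hWge : 1 / (2 * (M : ℝ) + 1) ≤ W) :
    (∀ r : ℝ, 0 ≤ r → r ≤ 1 →
      IsLeast (sumDivSet M W αS r)
        (2 * (M : ℝ) + 1 + αS - (2 * (M : ℝ) + 1) * r)) ∧
    (∀ r : ℝ, 1 ≤ r → r ≤ 1 + W * αS →
      IsLeast (sumDivSet M W αS r) (αS + (1 - r) / W)) :=
  sum_diversity_lp_large_W_general M W αS hW hS hWge
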